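/- arXiv:2504.18322 — 6 statements merged into one kernel-verified Lean document; each statement's English description precedes it below -/
import Mathlib

section
/- Let a : H × H → ℝ be a bounded coercive symmetric bilinear form on a Hilbert space H, W₀ ⊆ H a closed subspace, and 𝒞 : H → W₀ the linear operator defined by a(𝒞v, w) = a(v, w) for all w ∈ W₀ (the a-orthogonal projection onto W₀). Given a bounded projection π_H : H → V_H with kernel W ⊇ W₀ and V_H = im(π_H), define V^ms := (id − 𝒞)V_H. Then: (i) (id − 𝒞) : V_H → V^ms is a bijection with inverse π_H|_{V^ms}, so dim V^ms = dim V_H; (ii) H = V^ms ⊕ W; and (iii) a(v^ms, w) = 0 for all v^ms ∈ V^ms and w ∈ W₀. -/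
/-!
The operator `P := (id − 𝒞) ∘ π` is a projection: since `𝒞` maps into `W₀ ⊆ ker π` we have
`π ∘ (id − 𝒞) = π`, hence `P ∘ P = (id − 𝒞) ∘ (π ∘ (id − 𝒞)) ∘ π = (id − 𝒞) ∘ π ∘ π = P`.
Its range is `V^ms` and its kernel is `ker π = W`, which gives `H = V^ms ⊕ W`, and `π` undoes
`id − 𝒞` on `V_H`. The `a`-orthogonality is the defining equation of `𝒞`.
-/

namespace LinearMap

variable {R M : Type*} [Ring R] [AddCommGroup M] [Module R M]

theorem comp_id_sub_eq_self {π C : M →ₗ[R] M} (hC : π ∘ₗ C = 0) : π ∘ₗ (id - C) = π := by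
  rw [comp_sub, comp_id, hC, sub_zero]

section LeftInverse

variable {π f : M →ₗ[R] M} (hπ : IsIdempotentElem π) (hf : π ∘ₗ f = π)
include hπ hf

theorem leftInvOn_range_of_comp_eq : Set.LeftInvOn π f (range π) := by
  rintro _ ⟨u, rfl⟩
  rw [← comp_apply, hf]
  exact LinearMap.congr_fun hπ.eq u

theorem bijOn_map_range_of_comp_eq : Set.BijOn f (range π) ((range π).map f) := by
  rw [Submodule.map_coe]
  exact (leftInvOn_range_of_comp_eq hπ hf).injOn.bijOn_image

theorem rank_map_range_of_comp_eq : Module.rank R ((range π).map f) = Module.rank R (range π) := by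
  rw [← range_domRestrict]
  exact rank_range_of_injective _
    (Set.injOn_iff_injective.mp (leftInvOn_range_of_comp_eq hπ hf).injOn)

theorem isIdempotentElem_comp_of_comp_eq : IsIdempotentElem (f ∘ₗ π) := by
  change (f ∘ₗ π) ∘ₗ (f ∘ₗ π) = f ∘ₗ π
  rw [comp_assoc, ← comp_assoc π f π, hf, ← Module.End.mul_eq_comp π π, hπ.eq]

theorem ker_comp_eq_ker_of_comp_eq : ker (f ∘ₗ π) = ker π := by
  refine le_antisymm ?_ (ker_le_ker_comp π f)
  have hP : π ∘ₗ (f ∘ₗ π) = π := by rw [← comp_assoc, hf, ← Module.End.mul_eq_comp, hπ.eq]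
  simpa only [hP] using ker_le_ker_comp (f ∘ₗ π) π

theorem isCompl_map_range_ker_of_comp_eq : IsCompl ((range π).map f) (ker π) := by
  rw [← range_comp, ← ker_comp_eq_ker_of_comp_eq hπ hf]
  exact IsIdempotentElem.isCompl (isIdempotentElem_comp_of_comp_eq hπ hf)

end LeftInverse

end LinearMap

theorem ideal_multiscale_space_general
    {H : Type*} [NormedAddCommGroup H] [InnerProductSpace ℝ H]
    (a : H →ₗ[ℝ] H →ₗ[ℝ] ℝ)
    (W0 : Submodule ℝ H)
    (π 𝒞 : H →L[ℝ] H) (hπproj : ∀ v : H, π (π v) = π v)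
    (hW0ker : W0 ≤ LinearMap.ker (π : H →ₗ[ℝ] H))
    (h𝒞mem : ∀ v : H, 𝒞 v ∈ W0)
    (h𝒞eq : ∀ v : H, ∀ w ∈ W0, a (𝒞 v) w = a v w) :
    (∀ v ∈ LinearMap.range (π : H →ₗ[ℝ] H), π ((ContinuousLinearMap.id ℝ H - 𝒞) v) = v) ∧
    Set.BijOn (⇑(ContinuousLinearMap.id ℝ H - 𝒞)) (LinearMap.range (π : H →ₗ[ℝ] H))
      (Submodule.map ((ContinuousLinearMap.id ℝ H - 𝒞) : H →ₗ[ℝ] H)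
        (LinearMap.range (π : H →ₗ[ℝ] H))) ∧
    Module.rank ℝ
        (Submodule.map ((ContinuousLinearMap.id ℝ H - 𝒞) : H →ₗ[ℝ] H)
          (LinearMap.range (π : H →ₗ[ℝ] H))) =
      Module.rank ℝ (LinearMap.range (π : H →ₗ[ℝ] H)) ∧
    IsCompl
      (Submodule.map ((ContinuousLinearMap.id ℝ H - 𝒞) : H →ₗ[ℝ] H)
        (LinearMap.range (π : H →ₗ[ℝ] H)))
      (LinearMap.ker (π : H →ₗ[ℝ] H)) ∧
    (∀ vms ∈ Submodule.map ((ContinuousLinearMap.id ℝ H - 𝒞) : H →ₗ[ℝ] H)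
        (LinearMap.range (π : H →ₗ[ℝ] H)),
      ∀ w ∈ W0, a vms w = 0) := by
  have hπ : IsIdempotentElem (π : H →ₗ[ℝ] H) := LinearMap.ext hπproj
  have hπ𝒞 : (π : H →ₗ[ℝ] H) ∘ₗ 𝒞 = 0 :=
    LinearMap.range_le_ker_iff.mp fun _ ⟨v, hv⟩ => hv ▸ hW0ker (h𝒞mem v)
  have hf : (π : H →ₗ[ℝ] H) ∘ₗ ((ContinuousLinearMap.id ℝ H - 𝒞) : H →ₗ[ℝ] H) = π :=
    LinearMap.comp_id_sub_eq_self hπ𝒞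
  refine ⟨LinearMap.leftInvOn_range_of_comp_eq hπ hf,
    LinearMap.bijOn_map_range_of_comp_eq hπ hf, LinearMap.rank_map_range_of_comp_eq hπ hf,
    LinearMap.isCompl_map_range_ker_of_comp_eq hπ hf, ?_⟩
  rintro _ ⟨v, -, rfl⟩ w hw
  change a (v - 𝒞 v) w = 0
  rw [map_sub, LinearMap.sub_apply, h𝒞eq v w hw, sub_self]

/-- **The ideal multiscale space `V^ms = (id − 𝒞)V_H`.**  `H` is a Hilbert space,
`a` a bounded coercive symmetric bilinear form, `W₀ ⊆ H` a closed subspace,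
`𝒞 : H → W₀` the `a`-orthogonal projection onto `W₀` (`a(𝒞v, w) = a(v, w)` for all
`w ∈ W₀`), and `π` a bounded projection with `V_H = im π` and `W₀ ⊆ W = ker π`.
Then (i) `(id − 𝒞)` is a bijection from `V_H` onto `V^ms` with inverse `π|_{V^ms}`
(so `dim V^ms = dim V_H`), (ii) `H = V^ms ⊕ W`, (iii) `V^ms ⊥_a W₀`. -/
theorem ideal_multiscale_space
    {H : Type*} [NormedAddCommGroup H] [InnerProductSpace ℝ H] [CompleteSpace H]
    (a : H →ₗ[ℝ] H →ₗ[ℝ] ℝ)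
    (hsym : ∀ v w : H, a v w = a w v)
    (Ca αa : ℝ) (hαa : 0 < αa)
    (hbdd : ∀ v w : H, |a v w| ≤ Ca * ‖v‖ * ‖w‖)
    (hcoer : ∀ v : H, αa * ‖v‖ ^ 2 ≤ a v v)
    (W0 : Submodule ℝ H) (hW0closed : IsClosed (W0 : Set H))
    (π 𝒞 : H →L[ℝ] H) (hπproj : ∀ v : H, π (π v) = π v)
    (hW0ker : W0 ≤ LinearMap.ker (π : H →ₗ[ℝ] H))
    (h𝒞mem : ∀ v : H, 𝒞 v ∈ W0)
    (h𝒞eq : ∀ v : H, ∀ w ∈ W0, a (𝒞 v) w = a v w) :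
    (∀ v ∈ LinearMap.range (π : H →ₗ[ℝ] H), π ((ContinuousLinearMap.id ℝ H - 𝒞) v) = v) ∧
    Set.BijOn (⇑(ContinuousLinearMap.id ℝ H - 𝒞)) (LinearMap.range (π : H →ₗ[ℝ] H))
      (Submodule.map ((ContinuousLinearMap.id ℝ H - 𝒞) : H →ₗ[ℝ] H)
        (LinearMap.range (π : H →ₗ[ℝ] H))) ∧
    Module.rank ℝ
        (Submodule.map ((ContinuousLinearMap.id ℝ H - 𝒞) : H →ₗ[ℝ] H)
          (LinearMap.range (π : H →ₗ[ℝ] H))) =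
      Module.rank ℝ (LinearMap.range (π : H →ₗ[ℝ] H)) ∧
    IsCompl
      (Submodule.map ((ContinuousLinearMap.id ℝ H - 𝒞) : H →ₗ[ℝ] H)
        (LinearMap.range (π : H →ₗ[ℝ] H)))
      (LinearMap.ker (π : H →ₗ[ℝ] H)) ∧
    (∀ vms ∈ Submodule.map ((ContinuousLinearMap.id ℝ H - 𝒞) : H →ₗ[ℝ] H)
        (LinearMap.range (π : H →ₗ[ℝ] H)),
      ∀ w ∈ W0, a vms w = 0) :=
  ideal_multiscale_space_general a W0 π 𝒞 hπproj hW0ker h𝒞mem h𝒞eq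
end

section
/- With V^ms = (id − 𝒞)V_H the ideal multiscale space and W_{div0} = {w ∈ ker π_H : div w = 0}, the sum V^ms ⊕ W_{div0} is a-orthogonal but is a proper subspace of H₀(div,Ω); indeed div(V^ms ⊕ W_{div0}) = div(V_H) ⊊ div(H₀(div,Ω)). -/
/-!
Subtracting the correction `𝒞 v` kills exactly the `a`-pairing with `W_{div0}`, which gives
orthogonality, and changes nothing under `D` because `𝒞 v` is divergence-free; hence
`D(V^ms ⊔ W_{div0}) = D V_H`. This image is finite dimensional while `D H` is not, so
`V^ms ⊔ W_{div0}` cannot be all of `H`.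
-/

section

variable {R M N : Type*} [CommRing R] [AddCommGroup M] [Module R M] [AddCommGroup N] [Module R N]

theorem LinearMap.apply_eq_zero_of_mem_map_id_sub (a : M →ₗ[R] M →ₗ[R] N) {C : M →ₗ[R] M}
    {W : Submodule R M} (hC : ∀ v, ∀ w ∈ W, a (C v) w = a v w) (V : Submodule R M) :
    ∀ u ∈ V.map (LinearMap.id - C), ∀ w ∈ W, a u w = 0 := by
  rintro _ ⟨v, -, rfl⟩ w hw
  rw [LinearMap.sub_apply, LinearMap.id_apply, map_sub, LinearMap.sub_apply, hC v w hw, sub_self]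

theorem Submodule.map_map_id_sub_sup_eq_map {f : M →ₗ[R] N} {C : M →ₗ[R] M} (hC : ∀ v, f (C v) = 0)
    (V : Submodule R M) {W : Submodule R M} (hW : W ≤ LinearMap.ker f) :
    (V.map (LinearMap.id - C) ⊔ W).map f = V.map f := by
  have hfC : f.comp (LinearMap.id - C) = f := LinearMap.ext fun v => by simp [hC v]
  rw [Submodule.map_sup, ← Submodule.map_comp, hfC, LinearMap.le_ker_iff_map.mp hW, sup_bot_eq]

theorem Submodule.ne_top_of_map_lt_range {f : M →ₗ[R] N} {S : Submodule R M}
    (h : S.map f < LinearMap.range f) : S ≠ ⊤ := by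
  rintro rfl
  exact h.ne (Submodule.map_top f)

end

theorem ideal_space_proper_general
    {H L : Type*}
    [NormedAddCommGroup H] [InnerProductSpace ℝ H]
    [NormedAddCommGroup L] [InnerProductSpace ℝ L]
    (a : H →ₗ[ℝ] H →ₗ[ℝ] ℝ)
    (D : H →L[ℝ] L)
    (π 𝒞 : H →L[ℝ] H)
    (h𝒞mem : ∀ v : H, 𝒞 v ∈ LinearMap.ker (π : H →ₗ[ℝ] H) ⊓ LinearMap.ker (D : H →ₗ[ℝ] L))
    (h𝒞eq : ∀ v : H, ∀ w ∈ LinearMap.ker (π : H →ₗ[ℝ] H) ⊓ LinearMap.ker (D : H →ₗ[ℝ] L), a (𝒞 v) w = a v w)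
    (hfin : FiniteDimensional ℝ
      (Submodule.map (D : H →ₗ[ℝ] L) (LinearMap.range (π : H →ₗ[ℝ] H))))
    (hinf : ¬ FiniteDimensional ℝ (LinearMap.range (D : H →ₗ[ℝ] L))) :
    (∀ vms ∈ Submodule.map ((ContinuousLinearMap.id ℝ H - 𝒞) : H →ₗ[ℝ] H)
        (LinearMap.range (π : H →ₗ[ℝ] H)),
      ∀ w ∈ LinearMap.ker (π : H →ₗ[ℝ] H) ⊓ LinearMap.ker (D : H →ₗ[ℝ] L), a vms w = 0) ∧
    Submodule.map (D : H →ₗ[ℝ] L)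
        ((Submodule.map ((ContinuousLinearMap.id ℝ H - 𝒞) : H →ₗ[ℝ] H)
            (LinearMap.range (π : H →ₗ[ℝ] H))) ⊔ (LinearMap.ker (π : H →ₗ[ℝ] H) ⊓ LinearMap.ker (D : H →ₗ[ℝ] L))) =
      Submodule.map (D : H →ₗ[ℝ] L) (LinearMap.range (π : H →ₗ[ℝ] H)) ∧
    Submodule.map (D : H →ₗ[ℝ] L) (LinearMap.range (π : H →ₗ[ℝ] H)) < LinearMap.range (D : H →ₗ[ℝ] L) ∧
    ((Submodule.map ((ContinuousLinearMap.id ℝ H - 𝒞) : H →ₗ[ℝ] H)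
        (LinearMap.range (π : H →ₗ[ℝ] H))) ⊔ (LinearMap.ker (π : H →ₗ[ℝ] H) ⊓ LinearMap.ker (D : H →ₗ[ℝ] L))) ≠ ⊤ := by
  simp only [ContinuousLinearMap.coe_id]
  have hdiv : Submodule.map (D : H →ₗ[ℝ] L)
      (Submodule.map (LinearMap.id - (𝒞 : H →ₗ[ℝ] H)) (LinearMap.range (π : H →ₗ[ℝ] H)) ⊔
        (LinearMap.ker (π : H →ₗ[ℝ] H) ⊓ LinearMap.ker (D : H →ₗ[ℝ] L))) =
      Submodule.map (D : H →ₗ[ℝ] L) (LinearMap.range (π : H →ₗ[ℝ] H)) :=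
    Submodule.map_map_id_sub_sup_eq_map (fun v => (h𝒞mem v).2) _ inf_le_right
  have hlt : Submodule.map (D : H →ₗ[ℝ] L) (LinearMap.range (π : H →ₗ[ℝ] H)) <
      LinearMap.range (D : H →ₗ[ℝ] L) :=
    lt_of_le_of_ne LinearMap.map_le_range fun h => hinf (h ▸ hfin)
  exact ⟨a.apply_eq_zero_of_mem_map_id_sub h𝒞eq _, hdiv, hlt,
    Submodule.ne_top_of_map_lt_range (hdiv ▸ hlt)⟩

/-- **`V^ms ⊕ W_{div0}` is `a`-orthogonal but a proper subspace of `H₀(div,Ω)`.**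
`H = H₀(div,Ω)`, `D` the divergence, `π` the stable commuting projection onto the
Raviart–Thomas space `V_H = im π`, `W_{div0} = ker π ⊓ ker D`, and `𝒞` the ideal
correction operator (`a(𝒞v,w) = a(v,w)` for all `w ∈ W_{div0}`), where
`a(u,v) = (A⁻¹u, v)` is a bilinear form.  Since `div V_H` is finite dimensional while
`div H₀(div,Ω)` is not, the `a`-orthogonal sum `V^ms ⊔ W_{div0}` satisfies
`div(V^ms ⊔ W_{div0}) = div V_H ⊊ div H₀(div,Ω)` and is a proper subspace of `H`. -/
theorem ideal_space_proper
    {H L : Type*}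
    [NormedAddCommGroup H] [InnerProductSpace ℝ H] [CompleteSpace H]
    [NormedAddCommGroup L] [InnerProductSpace ℝ L] [CompleteSpace L]
    (a : H →ₗ[ℝ] H →ₗ[ℝ] ℝ) (hsym : ∀ v w : H, a v w = a w v)
    (D : H →L[ℝ] L) (P : L →L[ℝ] L)
    (π 𝒞 : H →L[ℝ] H) (hπproj : ∀ v : H, π (π v) = π v)
    (hcomm : ∀ v : H, D (π v) = P (D v))
    (h𝒞mem : ∀ v : H, 𝒞 v ∈ LinearMap.ker (π : H →ₗ[ℝ] H) ⊓ LinearMap.ker (D : H →ₗ[ℝ] L))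
    (h𝒞eq : ∀ v : H, ∀ w ∈ LinearMap.ker (π : H →ₗ[ℝ] H) ⊓ LinearMap.ker (D : H →ₗ[ℝ] L), a (𝒞 v) w = a v w)
    (hfin : FiniteDimensional ℝ
      (Submodule.map (D : H →ₗ[ℝ] L) (LinearMap.range (π : H →ₗ[ℝ] H))))
    (hinf : ¬ FiniteDimensional ℝ (LinearMap.range (D : H →ₗ[ℝ] L))) :
    (∀ vms ∈ Submodule.map ((ContinuousLinearMap.id ℝ H - 𝒞) : H →ₗ[ℝ] H)
        (LinearMap.range (π : H →ₗ[ℝ] H)),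
      ∀ w ∈ LinearMap.ker (π : H →ₗ[ℝ] H) ⊓ LinearMap.ker (D : H →ₗ[ℝ] L), a vms w = 0) ∧
    Submodule.map (D : H →ₗ[ℝ] L)
        ((Submodule.map ((ContinuousLinearMap.id ℝ H - 𝒞) : H →ₗ[ℝ] H)
            (LinearMap.range (π : H →ₗ[ℝ] H))) ⊔ (LinearMap.ker (π : H →ₗ[ℝ] H) ⊓ LinearMap.ker (D : H →ₗ[ℝ] L))) =
      Submodule.map (D : H →ₗ[ℝ] L) (LinearMap.range (π : H →ₗ[ℝ] H)) ∧
    Submodule.map (D : H →ₗ[ℝ] L) (LinearMap.range (π : H →ₗ[ℝ] H)) < LinearMap.range (D : H →ₗ[ℝ] L) ∧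
    ((Submodule.map ((ContinuousLinearMap.id ℝ H - 𝒞) : H →ₗ[ℝ] H)
        (LinearMap.range (π : H →ₗ[ℝ] H))) ⊔ (LinearMap.ker (π : H →ₗ[ℝ] H) ⊓ LinearMap.ker (D : H →ₗ[ℝ] L))) ≠ ⊤ :=
  ideal_space_proper_general a D π 𝒞 h𝒞mem h𝒞eq hfin hinf
end

section
/- Let (u, p) solve the continuous mixed problem and (u_H^ms, p_H) ∈ V^ms × (Q_H ∩ L²₀(Ω)) the ideal multiscale approximation defined by a(u_H^ms, v) + (div v, p_H) = 0 for all v ∈ V^ms and (div u_H^ms, q_H) = -(f, q_H) for all q_H ∈ Q_H. Then div u_H^ms = -P_H f, and consequently ‖div(u − u_H^ms)‖_{L²(Ω)} = ‖f − P_H f‖_{L²(Ω)} = inf_{q_H ∈ Q_H} ‖div u − q_H‖_{L²(Ω)}. -/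
/-!
Testing the discrete constraint with `q_H = div u_H^ms + P_H f`, which lies in `Q_H` because
`div V^ms ⊆ Q_H`, shows that this `q_H` has zero norm, so `div u_H^ms = -P_H f`; the same
argument in `L²₀(Ω)` gives `div u = -f`. The error identity is then immediate, and the infimum
is the best-approximation property of the orthogonal projection `P_H`.

Here `D` is the divergence on `H = H(div, Ω)`, `S = L²(Ω)`, `L0 = L²₀(Ω)` and `QH = Q_H`.
-/

open scoped RealInnerProductSpace

namespace Submodule

variable {E : Type*} [NormedAddCommGroup E] [InnerProductSpace ℝ E]

theorem eq_neg_of_forall_inner_eq_neg {K : Submodule ℝ E} {v f : E} (hv : v ∈ K) (hf : f ∈ K)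
    (h : ∀ q ∈ K, ⟪v, q⟫ = -⟪f, q⟫) : v = -f := by
  have hvf : v + f ∈ K := K.add_mem hv hf
  have hzero : ⟪v + f, v + f⟫ = 0 := by
    rw [inner_add_left, h _ hvf, neg_add_cancel]
  exact eq_neg_of_add_eq_zero_left (inner_self_eq_zero.mp hzero)

theorem eq_neg_starProjection_of_forall_inner_eq_neg {K : Submodule ℝ E}
    [K.HasOrthogonalProjection] {v : E} (f : E) (hv : v ∈ K)
    (h : ∀ q ∈ K, ⟪v, q⟫ = -⟪f, q⟫) : v = -K.starProjection f := by
  refine eq_neg_of_forall_inner_eq_neg hv (K.starProjection_apply_mem f) fun q hq => ?_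
  rw [h q hq, inner_starProjection_left_eq_right, K.starProjection_eq_self_iff.mpr hq]

theorem isLeast_norm_sub_starProjection (K : Submodule ℝ E) [K.HasOrthogonalProjection] (x : E) :
    IsLeast ((fun w => ‖x - w‖) '' K) ‖x - K.starProjection x‖ := by
  refine ⟨⟨_, K.starProjection_apply_mem x, rfl⟩, ?_⟩
  rintro _ ⟨w, hw, rfl⟩
  rw [starProjection_minimal]
  exact ciInf_le ⟨0, by rintro _ ⟨_, rfl⟩; positivity⟩ (⟨w, hw⟩ : K)

end Submodule

theorem ideal_divergence_identity_general
    {H S : Type*}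
    [NormedAddCommGroup H] [InnerProductSpace ℝ H]
    [NormedAddCommGroup S] [InnerProductSpace ℝ S]
    (D : H →L[ℝ] S)
    (QH L0 : Submodule ℝ S) [QH.HasOrthogonalProjection]
    (Vms : Submodule ℝ H)
    (hdivVms : ∀ v ∈ Vms, D v ∈ QH)
    (hDL0 : ∀ v : H, D v ∈ L0)
    (f : S) (hf : f ∈ L0)
    (u : H)
    (h2 : ∀ q ∈ L0, ⟪D u, q⟫ = -⟪f, q⟫)
    (uHms : H) (huHms : uHms ∈ Vms)
    (hd2 : ∀ qH ∈ QH, ⟪D uHms, qH⟫ = -⟪f, qH⟫) :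
    D uHms = -(QH.orthogonalProjectionOnto f : S) ∧
    ‖D (u - uHms)‖ = ‖f - (QH.orthogonalProjectionOnto f : S)‖ ∧
    IsLeast ((fun qH : S => ‖D u - qH‖) '' (QH : Set S))
      ‖f - (QH.orthogonalProjectionOnto f : S)‖ := by
  rw [← QH.starProjection_apply]
  have hDu : D u = -f := Submodule.eq_neg_of_forall_inner_eq_neg (hDL0 u) hf h2
  have hDuHms : D uHms = -QH.starProjection f :=
    Submodule.eq_neg_starProjection_of_forall_inner_eq_neg f (hdivVms uHms huHms) hd2
  have hnorm : ‖-f - QH.starProjection (-f)‖ = ‖f - QH.starProjection f‖ := by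
    rw [map_neg, neg_sub_neg, norm_sub_rev]
  refine ⟨hDuHms, ?_, ?_⟩
  · rw [map_sub, hDu, hDuHms, ← hnorm, map_neg]
  · simpa only [hDu, hnorm] using QH.isLeast_norm_sub_starProjection (-f)

/-- **Divergence identity for the ideal multiscale method.**  `H = H₀(div,Ω)` with
divergence `D : H → S` into the scalar `L²`-space `S`, `QH = Q_H^k` the coarse
pressure space with `L²`-orthogonal projection `P_H = orthogonalProjection QH`,
`L0 = L²₀(Ω)`, `a(u,v) = (A⁻¹u,v)` a bilinear form, and `V^ms` the ideal multiscale
space with `div V^ms ⊆ Q_H`.  If `(u,p)` solves the continuous mixed problem and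
`(u_H^ms, p_H) ∈ V^ms × (Q_H ∩ L²₀)` the ideal discrete one, then
`div u_H^ms = -P_H f`, hence `‖div(u − u_H^ms)‖ = ‖f − P_H f‖ = inf_{q_H ∈ Q_H} ‖div u − q_H‖`. -/
theorem ideal_divergence_identity
    {H S : Type*}
    [NormedAddCommGroup H] [InnerProductSpace ℝ H] [CompleteSpace H]
    [NormedAddCommGroup S] [InnerProductSpace ℝ S] [CompleteSpace S]
    (D : H →L[ℝ] S)
    (QH L0 : Submodule ℝ S) [QH.HasOrthogonalProjection]
    (a : H →ₗ[ℝ] H →ₗ[ℝ] ℝ)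
    (Vms : Submodule ℝ H)
    (hdivVms : ∀ v ∈ Vms, D v ∈ QH)
    (hDL0 : ∀ v : H, D v ∈ L0)
    (f : S) (hf : f ∈ L0)
    (u : H) (p : S) (hp : p ∈ L0)
    (h1 : ∀ v : H, a u v + ⟪D v, p⟫ = 0)
    (h2 : ∀ q ∈ L0, ⟪D u, q⟫ = -⟪f, q⟫)
    (uHms : H) (pH : S) (huHms : uHms ∈ Vms) (hpH : pH ∈ QH ⊓ L0)
    (hd1 : ∀ v ∈ Vms, a uHms v + ⟪D v, pH⟫ = 0)
    (hd2 : ∀ qH ∈ QH, ⟪D uHms, qH⟫ = -⟪f, qH⟫) :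
    D uHms = -(QH.orthogonalProjectionOnto f : S) ∧
    ‖D (u - uHms)‖ = ‖f - (QH.orthogonalProjectionOnto f : S)‖ ∧
    IsLeast ((fun qH : S => ‖D u - qH‖) '' (QH : Set S))
      ‖f - (QH.orthogonalProjectionOnto f : S)‖ :=
  ideal_divergence_identity_general D QH L0 Vms hdivVms hDL0 f hf u h2 uHms huHms hd2
end

section
/- Under the same assumptions, let u(P_H f) denote the exact velocity solution of the mixed problem with source P_H f in place of f. Then u(P_H f) ∈ V^ms(f); in particular u(P_H f) = (id − 𝒞)π_H(u(P_H f)). Consequently, if f ∈ Q_H (so that P_H f = f), the ideal multiscale method is exact for the velocity: u = u_H^ms. -/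
open scoped RealInnerProductSpace

/-!
Write `w = u(P_H f) − (id − 𝒞)π_H u(P_H f)`. Since `π_H` is a projection with `π_H 𝒞 = 0`,
`π_H w = 0`; since `π_H` commutes with the divergence and `div u(P_H f) = −P_H f ∈ Q_H`,
`div w = 0`. So `w ∈ W_{div0}`, which is `a`-orthogonal both to `V^ms` (definition of `𝒞`) and,
through the first equation of the mixed problem, to `u(P_H f)`; hence `a(w, w) = 0` and `w = 0`
by coercivity. For `f ∈ Q_H` the exact and the multiscale velocity then have the same divergence
and both satisfy the first equation on `V^ms`, so they coincide, again by coercivity.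
-/

theorem eq_of_coercive_of_apply_sub_eq_zero {E : Type*} [NormedAddCommGroup E] [Module ℝ E]
    {a : E →ₗ[ℝ] E →ₗ[ℝ] ℝ} {α : ℝ} (hα : 0 < α) (hcoer : ∀ v : E, α * ‖v‖ ^ 2 ≤ a v v)
    {x y : E} (hx : a x (x - y) = 0) (hy : a y (x - y) = 0) : x = y := by
  have hself : a (x - y) (x - y) = 0 := by rw [LinearMap.map_sub₂, hx, hy, sub_zero]
  have hnorm : ‖x - y‖ ^ 2 ≤ 0 := nonpos_of_mul_nonpos_right (hself ▸ hcoer (x - y)) hα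
  exact sub_eq_zero.mp (norm_eq_zero.mp ((sq_nonpos_iff _).mp hnorm))

theorem Submodule.eq_of_forall_inner_eq {𝕜 F : Type*} [RCLike 𝕜] [NormedAddCommGroup F]
    [InnerProductSpace 𝕜 F] {K : Submodule 𝕜 F} {s t : F} (hs : s ∈ K) (ht : t ∈ K)
    (h : ∀ q ∈ K, inner 𝕜 s q = inner 𝕜 t q) : s = t := by
  rw [← sub_eq_zero, ← inner_self_eq_zero (𝕜 := 𝕜), inner_sub_left, h _ (K.sub_mem hs ht),
    sub_self]

section MixedProblem

variable {H S : Type*} [NormedAddCommGroup H] [InnerProductSpace ℝ H]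
  [NormedAddCommGroup S] [InnerProductSpace ℝ S]

/-- The ideal multiscale space `V^ms = (id − 𝒞) V_H` with `V_H = im π`. -/
def multiscaleSpace (π 𝒞 : H →L[ℝ] H) : Submodule ℝ H :=
  Submodule.map ((ContinuousLinearMap.id ℝ H - 𝒞) : H →ₗ[ℝ] H) (LinearMap.range (π : H →ₗ[ℝ] H))

/-- The divergence-free fine-scale space `W_{div0} = ker π ⊓ ker D`. -/
def divFreeKernel (π : H →L[ℝ] H) (D : H →L[ℝ] S) : Submodule ℝ H :=
  LinearMap.ker (π : H →ₗ[ℝ] H) ⊓ LinearMap.ker (D : H →ₗ[ℝ] S)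

variable {a : H →ₗ[ℝ] H →ₗ[ℝ] ℝ} {D : H →L[ℝ] S} {π 𝒞 : H →L[ℝ] H}

theorem apply_eq_zero_of_divergence_eq_zero {V : Submodule ℝ H} {u v : H} {p : S}
    (h1 : ∀ v ∈ V, a u v + ⟪D v, p⟫ = 0) (hv : v ∈ V) (hDv : D v = 0) : a u v = 0 := by
  simpa [hDv] using h1 v hv

theorem eq_of_mixed_of_divergence_eq {V : Submodule ℝ H} {α : ℝ} (hα : 0 < α)
    (hcoer : ∀ v : H, α * ‖v‖ ^ 2 ≤ a v v) {x y : H} {p q : S}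
    (hx : ∀ v ∈ V, a x v + ⟪D v, p⟫ = 0) (hy : ∀ v ∈ V, a y v + ⟪D v, q⟫ = 0)
    (hmem : x - y ∈ V) (hD : D x = D y) : x = y := by
  have hDsub : D (x - y) = 0 := by rw [map_sub, hD, sub_self]
  exact eq_of_coercive_of_apply_sub_eq_zero hα hcoer
    (apply_eq_zero_of_divergence_eq_zero hx hmem hDsub)
    (apply_eq_zero_of_divergence_eq_zero hy hmem hDsub)

theorem apply_sub_correction_eq_zero
    (h𝒞eq : ∀ v : H, ∀ w ∈ divFreeKernel π D, a (𝒞 v) w = a v w) (z : H) {w : H}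
    (hw : w ∈ divFreeKernel π D) : a (z - 𝒞 z) w = 0 := by
  simp [h𝒞eq z w hw]

variable (QH : Submodule ℝ S) [QH.HasOrthogonalProjection]

theorem divergence_sub_correction_interpolant
    (hcomm : ∀ v : H, D (π v) = (QH.orthogonalProjectionOnto (D v) : S))
    (h𝒞mem : ∀ v : H, 𝒞 v ∈ divFreeKernel π D) (v : H) :
    D (π v - 𝒞 (π v)) = QH.orthogonalProjectionOnto (D v) := by
  have hD𝒞 : D (𝒞 (π v)) = 0 := (h𝒞mem (π v)).2
  rw [map_sub, hD𝒞, sub_zero, hcomm]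

theorem divergence_mem_of_mem_multiscaleSpace
    (hcomm : ∀ v : H, D (π v) = (QH.orthogonalProjectionOnto (D v) : S))
    (h𝒞mem : ∀ v : H, 𝒞 v ∈ divFreeKernel π D) {u : H} (hu : u ∈ multiscaleSpace π 𝒞) :
    D u ∈ QH := by
  obtain ⟨_, ⟨v, rfl⟩, rfl⟩ := hu
  show D (π v - 𝒞 (π v)) ∈ QH
  rw [divergence_sub_correction_interpolant QH hcomm h𝒞mem]
  exact SetLike.coe_mem _

theorem eq_sub_correction_interpolant_of_divergence_mem {α : ℝ} (hα : 0 < α)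
    (hcoer : ∀ v : H, α * ‖v‖ ^ 2 ≤ a v v) (hπproj : ∀ v : H, π (π v) = π v)
    (hcomm : ∀ v : H, D (π v) = (QH.orthogonalProjectionOnto (D v) : S))
    (h𝒞mem : ∀ v : H, 𝒞 v ∈ divFreeKernel π D)
    (h𝒞eq : ∀ v : H, ∀ w ∈ divFreeKernel π D, a (𝒞 v) w = a v w)
    {u : H} {p : S} (h1 : ∀ v : H, a u v + ⟪D v, p⟫ = 0) (hDu : D u ∈ QH) :
    u = π u - 𝒞 (π u) := by
  set w := u - (π u - 𝒞 (π u))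
  have hπw : π w = 0 := by
    have hπ𝒞 : π (𝒞 (π u)) = 0 := (h𝒞mem (π u)).1
    simp [w, hπproj, hπ𝒞]
  have hDw : D w = 0 := by
    rw [map_sub, divergence_sub_correction_interpolant QH hcomm h𝒞mem,
      show (QH.orthogonalProjectionOnto (D u) : S) = D u from
        QH.starProjection_eq_self_iff.mpr hDu, sub_self]
  have hw : w ∈ divFreeKernel π D := ⟨hπw, hDw⟩
  exact eq_of_coercive_of_apply_sub_eq_zero hα hcoer
    (apply_eq_zero_of_divergence_eq_zero (fun v _ => h1 v) Submodule.mem_top hDw)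
    (apply_sub_correction_eq_zero h𝒞eq _ hw)

end MixedProblem

theorem ideal_method_exactness_general
    {H S : Type*}
    [NormedAddCommGroup H] [InnerProductSpace ℝ H]
    [NormedAddCommGroup S] [InnerProductSpace ℝ S]
    (D : H →L[ℝ] S)
    (QH L0 : Submodule ℝ S) [Submodule.HasOrthogonalProjection QH]
    (a : H →ₗ[ℝ] H →ₗ[ℝ] ℝ)
    (αa : ℝ) (hαa : 0 < αa) (hcoer : ∀ v : H, αa * ‖v‖ ^ 2 ≤ a v v)
    (π 𝒞 : H →L[ℝ] H) (hπproj : ∀ v : H, π (π v) = π v)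
    (hcomm : ∀ v : H, D (π v) = (Submodule.orthogonalProjectionOnto QH (D v) : S))
    (h𝒞mem : ∀ v : H, 𝒞 v ∈ LinearMap.ker (π : H →ₗ[ℝ] H) ⊓ LinearMap.ker (D : H →ₗ[ℝ] S))
    (h𝒞eq : ∀ v : H, ∀ w ∈ LinearMap.ker (π : H →ₗ[ℝ] H) ⊓ LinearMap.ker (D : H →ₗ[ℝ] S), a (𝒞 v) w = a v w)
    (hDL0 : ∀ v : H, D v ∈ L0)
    (f : S) (hPfL0 : (Submodule.orthogonalProjectionOnto QH f : S) ∈ L0)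
    -- exact solution (u,p) with source f
    (u : H) (p : S)
    (h1 : ∀ v : H, a u v + ⟪D v, p⟫ = 0)
    (h2 : ∀ q ∈ L0, ⟪D u, q⟫ = -⟪f, q⟫)
    -- exact solution (uPf, pPf) with source P_H f
    (uPf : H) (pPf : S)
    (h1Pf : ∀ v : H, a uPf v + ⟪D v, pPf⟫ = 0)
    (h2Pf : ∀ q ∈ L0, ⟪D uPf, q⟫ = -⟪(Submodule.orthogonalProjectionOnto QH f : S), q⟫)
    -- ideal multiscale solution (uHms, pH)
    (uHms : H) (pH : S)
    (huHms : uHms ∈ Submodule.map ((ContinuousLinearMap.id ℝ H - 𝒞) : H →ₗ[ℝ] H)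
      (LinearMap.range (π : H →ₗ[ℝ] H)))
    (hd1 : ∀ v ∈ Submodule.map ((ContinuousLinearMap.id ℝ H - 𝒞) : H →ₗ[ℝ] H)
      (LinearMap.range (π : H →ₗ[ℝ] H)), a uHms v + ⟪D v, pH⟫ = 0)
    (hd2 : ∀ qH ∈ QH, ⟪D uHms, qH⟫ = -⟪f, qH⟫) :
    uPf ∈ Submodule.map ((ContinuousLinearMap.id ℝ H - 𝒞) : H →ₗ[ℝ] H)
        (LinearMap.range (π : H →ₗ[ℝ] H)) ∧
    D uPf = -(Submodule.orthogonalProjectionOnto QH f : S) ∧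
    uPf = (ContinuousLinearMap.id ℝ H - 𝒞) (π uPf) ∧
    (f ∈ QH → u = uHms) := by
  set Pf : S := (QH.orthogonalProjectionOnto f : S)
  have hDuPf : D uPf = -Pf :=
    Submodule.eq_of_forall_inner_eq (hDL0 uPf) (L0.neg_mem hPfL0) fun q hq => by
      rw [h2Pf q hq, inner_neg_left]
  have hself : uPf = π uPf - 𝒞 (π uPf) :=
    eq_sub_correction_interpolant_of_divergence_mem QH hαa hcoer hπproj hcomm h𝒞mem h𝒞eq h1Pf
      (hDuPf ▸ QH.neg_mem (SetLike.coe_mem _))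
  have hmem : uPf ∈ multiscaleSpace π 𝒞 := ⟨π uPf, LinearMap.mem_range_self _ _, hself.symm⟩
  refine ⟨hmem, hDuPf, hself, fun hfQ => ?_⟩
  have hPf : Pf = f := QH.starProjection_eq_self_iff.mpr hfQ
  have hDu : D u = D uPf :=
    Submodule.eq_of_forall_inner_eq (hDL0 u) (hDL0 uPf) fun q hq => by
      rw [h2 q hq, h2Pf q hq, hPf]
  have hDuHms : D uHms = -f :=
    Submodule.eq_of_forall_inner_eq (divergence_mem_of_mem_multiscaleSpace QH hcomm h𝒞mem huHms)
      (QH.neg_mem hfQ) fun q hq => by rw [hd2 q hq, inner_neg_left]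
  have hu : u = uPf := eq_of_mixed_of_divergence_eq hαa hcoer
    (fun v _ => h1 v) (fun v _ => h1Pf v) Submodule.mem_top hDu
  have huPf : uPf = uHms := eq_of_mixed_of_divergence_eq hαa hcoer (fun v _ => h1Pf v) hd1
    ((multiscaleSpace π 𝒞).sub_mem hmem huHms) (by rw [hDuPf, hDuHms, hPf])
  exact hu.trans huPf

/-- **Exactness of the ideal multiscale method for projected data.**
`H = H₀(div,Ω)`, `D` the divergence into `S`, `QH = Q_H` with `L²`-projection,
`L0 = L²₀(Ω)`, `π` the stable commuting quasi-interpolation with `V_H = im π` and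
`W_{div0} = ker π ⊓ ker D`, `𝒞` the ideal correction operator, and
`V^ms = (id − 𝒞)V_H`.  If `u(P_H f)` denotes the exact velocity for the source
`P_H f`, then `u(P_H f) ∈ V^ms(f)`, i.e. `u(P_H f) ∈ V^ms` with
`div u(P_H f) = -P_H f`, and `u(P_H f) = (id − 𝒞)π_H(u(P_H f))`.  Consequently,
if `f ∈ Q_H` the method is exact for the velocity: `u = u_H^ms`. -/
theorem ideal_method_exactness
    {H S : Type*}
    [NormedAddCommGroup H] [InnerProductSpace ℝ H] [CompleteSpace H]
    [NormedAddCommGroup S] [InnerProductSpace ℝ S] [CompleteSpace S]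
    (D : H →L[ℝ] S)
    (QH L0 : Submodule ℝ S) [Submodule.HasOrthogonalProjection QH]
    (a : H →ₗ[ℝ] H →ₗ[ℝ] ℝ)
    (hsym : ∀ v w : H, a v w = a w v)
    (αa : ℝ) (hαa : 0 < αa) (hcoer : ∀ v : H, αa * ‖v‖ ^ 2 ≤ a v v)
    (π 𝒞 : H →L[ℝ] H) (hπproj : ∀ v : H, π (π v) = π v)
    (hcomm : ∀ v : H, D (π v) = (Submodule.orthogonalProjectionOnto QH (D v) : S))
    (h𝒞mem : ∀ v : H, 𝒞 v ∈ LinearMap.ker (π : H →ₗ[ℝ] H) ⊓ LinearMap.ker (D : H →ₗ[ℝ] S))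
    (h𝒞eq : ∀ v : H, ∀ w ∈ LinearMap.ker (π : H →ₗ[ℝ] H) ⊓ LinearMap.ker (D : H →ₗ[ℝ] S), a (𝒞 v) w = a v w)
    (hDL0 : ∀ v : H, D v ∈ L0)
    (f : S) (hf : f ∈ L0) (hPfL0 : (Submodule.orthogonalProjectionOnto QH f : S) ∈ L0)
    -- exact solution (u,p) with source f
    (u : H) (p : S) (hp : p ∈ L0)
    (h1 : ∀ v : H, a u v + ⟪D v, p⟫ = 0)
    (h2 : ∀ q ∈ L0, ⟪D u, q⟫ = -⟪f, q⟫)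
    -- exact solution (uPf, pPf) with source P_H f
    (uPf : H) (pPf : S) (hpPf : pPf ∈ L0)
    (h1Pf : ∀ v : H, a uPf v + ⟪D v, pPf⟫ = 0)
    (h2Pf : ∀ q ∈ L0, ⟪D uPf, q⟫ = -⟪(Submodule.orthogonalProjectionOnto QH f : S), q⟫)
    -- ideal multiscale solution (uHms, pH)
    (uHms : H) (pH : S)
    (huHms : uHms ∈ Submodule.map ((ContinuousLinearMap.id ℝ H - 𝒞) : H →ₗ[ℝ] H)
      (LinearMap.range (π : H →ₗ[ℝ] H)))
    (hpH : pH ∈ QH ⊓ L0)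
    (hd1 : ∀ v ∈ Submodule.map ((ContinuousLinearMap.id ℝ H - 𝒞) : H →ₗ[ℝ] H)
      (LinearMap.range (π : H →ₗ[ℝ] H)), a uHms v + ⟪D v, pH⟫ = 0)
    (hd2 : ∀ qH ∈ QH, ⟪D uHms, qH⟫ = -⟪f, qH⟫) :
    uPf ∈ Submodule.map ((ContinuousLinearMap.id ℝ H - 𝒞) : H →ₗ[ℝ] H)
        (LinearMap.range (π : H →ₗ[ℝ] H)) ∧
    D uPf = -(Submodule.orthogonalProjectionOnto QH f : S) ∧
    uPf = (ContinuousLinearMap.id ℝ H - 𝒞) (π uPf) ∧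
    (f ∈ QH → u = uHms) :=
  ideal_method_exactness_general D QH L0 a αa hαa hcoer π 𝒞 hπproj hcomm h𝒞mem h𝒞eq hDL0 f hPfL0 u p
    h1 h2 uPf pPf h1Pf h2Pf uHms pH huHms hd1 hd2
end

section
/- Under the same assumptions, the energy-norm error of the ideal multiscale method satisfies ⦀ u − u_H^ms ⦀ ≤ C·H·‖f − P_H f‖_{L²(Ω)}, where C depends only on the ellipticity bounds α, β of A and the Poincaré–Wirtinger constant of Ω, but not on the mesh size H or the oscillations of A. -/
open scoped RealInnerProductSpace

/-!
The ideal multiscale flux `u_H^ms` is energy-orthogonal to every divergence-free field: such a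
field splits into its multiscale part `(id − 𝒞)(π z)`, which is divergence-free because `π`
commutes with the divergence, and a remainder in `ker π ∩ ker div`, against which `V^ms` is
energy-orthogonal by the definition of the corrector. Since `u(P_H f)` has the same divergence
`−P_H f` as `u_H^ms`, Pythagoras gives quasi-optimality `⦀u − u_H^ms⦀ ≤ ⦀u − u(P_H f)⦀`.
Writing `e = u − u(P_H f)` and `q = p − p(P_H f)`, the first mixed equation says that `A⁻¹e` is
the weak gradient of `q`, and testing it with `e` gives
`⦀e⦀² = (f − P_H f, q) = (f − P_H f, q − P_H q) ≤ ‖f − P_H f‖ · C_P H ‖A⁻¹e‖`,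
while `‖A⁻¹e‖ ≤ √β ⦀e⦀` by Cauchy–Schwarz for the positive operator `A⁻¹`.
-/

theorem Real.sqrt_le_of_le_mul_sqrt {x K : ℝ} (hK : 0 ≤ K) (h : x ≤ K * √x) : √x ≤ K := by
  rcases (Real.sqrt_nonneg x).eq_or_lt with h0 | h0
  · exact h0 ▸ hK
  · refine le_of_mul_le_mul_right ?_ h0
    rwa [Real.mul_self_sqrt (Real.sqrt_pos.mp h0).le]

theorem Submodule.eq_neg_of_forall_inner_eq_neg_s10 {E : Type*} [NormedAddCommGroup E]
    [InnerProductSpace ℝ E] {K : Submodule ℝ E} {x y : E} (hxy : x + y ∈ K)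
    (h : ∀ q ∈ K, ⟪x, q⟫ = -⟪y, q⟫) : x = -y := by
  have : ⟪x + y, x + y⟫ = 0 := by rw [inner_add_left, h _ hxy, neg_add_cancel]
  exact eq_neg_of_add_eq_zero_left (inner_self_eq_zero.mp this)

namespace ContinuousLinearMap.IsPositive

variable {E : Type*} [NormedAddCommGroup E] [InnerProductSpace ℝ E] {T : E →L[ℝ] E}

theorem inner_sq_le (hT : T.IsPositive) (x y : E) :
    ⟪T x, y⟫ ^ 2 ≤ ⟪T x, x⟫ * ⟪T y, y⟫ := by
  have h := LinearMap.BilinForm.apply_mul_apply_le_of_forall_zero_le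
    ((innerₗ E).comp (T : E →ₗ[ℝ] E)) hT.inner_nonneg_left x y
  simpa [sq, hT.inner_left_eq_inner_right y x, real_inner_comm] using h

theorem norm_apply_le (hT : T.IsPositive) {β : ℝ} (hβ : ∀ w, ⟪T w, w⟫ ≤ β * ‖w‖ ^ 2) (x : E) :
    ‖T x‖ ≤ √β * √⟪T x, x⟫ := by
  have hsq : ‖T x‖ ^ 2 ≤ β * ⟪T x, x⟫ := by
    rcases eq_or_ne (T x) 0 with h | h
    · simp [h]
    have hcs : ⟪T x, T x⟫ ^ 2 ≤ ⟪T x, x⟫ * (β * ‖T x‖ ^ 2) :=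
      (hT.inner_sq_le x (T x)).trans
        (mul_le_mul_of_nonneg_left (hβ (T x)) (hT.inner_nonneg_left x))
    rw [real_inner_self_eq_norm_sq] at hcs
    refine le_of_mul_le_mul_right (a := ‖T x‖ ^ 2) ?_ (by positivity)
    linarith
  rw [← Real.sqrt_mul' _ (hT.inner_nonneg_left x), ← Real.sqrt_sq (norm_nonneg _)]
  exact Real.sqrt_le_sqrt hsq

theorem inner_map_self_le_sub (hT : T.IsPositive) {x y : E} (h : ⟪T x, y⟫ = 0) :
    ⟪T x, x⟫ ≤ ⟪T (x - y), x - y⟫ := by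
  have hyx : ⟪T y, x⟫ = 0 := by rw [hT.inner_left_eq_inner_right, real_inner_comm, h]
  have := hT.inner_nonneg_left y
  simp only [map_sub, inner_sub_left, inner_sub_right, h, hyx]
  linarith

end ContinuousLinearMap.IsPositive

section MixedProblem

variable {V F S : Type*} [NormedAddCommGroup V] [InnerProductSpace ℝ V]
  [NormedAddCommGroup F] [InnerProductSpace ℝ F] [NormedAddCommGroup S] [InnerProductSpace ℝ S]
  (Ainv : F →L[ℝ] F) (ι : V →L[ℝ] F) (D : V →L[ℝ] S)

theorem inner_div_sub_eq_neg_inner_sub {u₁ u₂ : V} {p₁ p₂ : S}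
    (h₁ : ∀ v, ⟪Ainv (ι u₁), ι v⟫ + ⟪D v, p₁⟫ = 0)
    (h₂ : ∀ v, ⟪Ainv (ι u₂), ι v⟫ + ⟪D v, p₂⟫ = 0) (v : V) :
    ⟪D v, p₁ - p₂⟫ = -⟪Ainv (ι (u₁ - u₂)), ι v⟫ := by
  have := h₁ v
  have := h₂ v
  simp only [map_sub, inner_sub_left, inner_sub_right]
  linarith

theorem energy_sub_le_of_div_eq {u u' w : V} {p : S} (hA : Ainv.IsPositive)
    (h : ∀ v, ⟪Ainv (ι u), ι v⟫ + ⟪D v, p⟫ = 0)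
    (hw : ∀ z, D z = 0 → ⟪Ainv (ι w), ι z⟫ = 0) (hD : D u' = D w) :
    ⟪Ainv (ι (u - w)), ι (u - w)⟫ ≤ ⟪Ainv (ι (u - u')), ι (u - u')⟫ := by
  have hz : D (u' - w) = 0 := by rw [map_sub, hD, sub_self]
  have hu : ⟪Ainv (ι u), ι (u' - w)⟫ = 0 := by simpa [hz] using h (u' - w)
  have horth : ⟪Ainv (ι (u - w)), ι (u' - w)⟫ = 0 := by
    rw [map_sub, map_sub, inner_sub_left, hu, hw _ hz, sub_self]
  simpa only [← map_sub, sub_sub_sub_cancel_right] using hA.inner_map_self_le_sub horth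

theorem sqrt_energy_sub_le_of_sub_mem_orthogonal {H1 : Type*} [NormedAddCommGroup H1] [InnerProductSpace ℝ H1]
    (G : H1 →L[ℝ] F) (j : H1 →L[ℝ] S) (QH : Submodule ℝ S) [QH.HasOrthogonalProjection]
    {β C_P Hm : ℝ} (hCP : 0 ≤ C_P) (hHm : 0 ≤ Hm) (hA : Ainv.IsPositive)
    (hupp : ∀ w, ⟪Ainv w, w⟫ ≤ β * ‖w‖ ^ 2)
    (happrox : ∀ r : H1, ‖j r - (QH.orthogonalProjectionOnto (j r) : S)‖ ≤ C_P * Hm * ‖G r‖)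
    (hGradChar : ∀ (pp : S) (g : F),
      (∀ v : V, ⟪D v, pp⟫ = -⟪g, ι v⟫) → ∃ pt : H1, j pt = pp ∧ G pt = g)
    {u₁ u₂ : V} {p₁ p₂ f₁ f₂ : S}
    (h₁ : ∀ v, ⟪Ainv (ι u₁), ι v⟫ + ⟪D v, p₁⟫ = 0)
    (h₂ : ∀ v, ⟪Ainv (ι u₂), ι v⟫ + ⟪D v, p₂⟫ = 0)
    (hD₁ : D u₁ = -f₁) (hD₂ : D u₂ = -f₂) (hf : f₁ - f₂ ∈ QHᗮ) :
    √⟪Ainv (ι (u₁ - u₂)), ι (u₁ - u₂)⟫ ≤ √β * C_P * Hm * ‖f₁ - f₂‖ := by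
  set e := u₁ - u₂
  set q := p₁ - p₂
  have hweak := inner_div_sub_eq_neg_inner_sub Ainv ι D h₁ h₂
  obtain ⟨r, hjr, hGr⟩ := hGradChar q _ hweak
  have henergy : ⟪Ainv (ι e), ι e⟫ = ⟪f₁ - f₂, q - QH.orthogonalProjectionOnto q⟫ := by
    rw [inner_sub_right, Submodule.inner_left_of_mem_orthogonal (Submodule.coe_mem _) hf,
      sub_zero, ← neg_neg ⟪Ainv (ι e), ι e⟫, ← hweak, map_sub, hD₁, hD₂, neg_sub_neg,
      ← inner_neg_left, neg_sub]
  apply Real.sqrt_le_of_le_mul_sqrt (by positivity)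
  calc ⟪Ainv (ι e), ι e⟫ = ⟪f₁ - f₂, q - QH.orthogonalProjectionOnto q⟫ := henergy
    _ ≤ ‖f₁ - f₂‖ * ‖q - QH.orthogonalProjectionOnto q‖ := real_inner_le_norm _ _
    _ ≤ ‖f₁ - f₂‖ * (C_P * Hm * ‖Ainv (ι e)‖) := by
      gcongr
      simpa only [hjr, hGr] using happrox r
    _ ≤ ‖f₁ - f₂‖ * (C_P * Hm * (√β * √⟪Ainv (ι e), ι e⟫)) := by
      gcongr
      exact hA.norm_apply_le hupp _
    _ = √β * C_P * Hm * ‖f₁ - f₂‖ * √⟪Ainv (ι e), ι e⟫ := by ring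

def msSpace (π 𝒞 : V →L[ℝ] V) : Submodule ℝ V :=
  Submodule.map ((ContinuousLinearMap.id ℝ V - 𝒞) : V →ₗ[ℝ] V) (LinearMap.range (π : V →ₗ[ℝ] V))

def fineSpace (π : V →L[ℝ] V) : Submodule ℝ V :=
  LinearMap.ker (π : V →ₗ[ℝ] V) ⊓ LinearMap.ker (D : V →ₗ[ℝ] S)

variable {π 𝒞 : V →L[ℝ] V}

theorem inner_eq_zero_of_mem_msSpace_of_mem_fineSpace
    (h𝒞eq : ∀ v : V, ∀ w ∈ fineSpace D π, ⟪Ainv (ι (𝒞 v)), ι w⟫ = ⟪Ainv (ι v), ι w⟫)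
    {y w : V} (hy : y ∈ msSpace π 𝒞) (hw : w ∈ fineSpace D π) :
    ⟪Ainv (ι y), ι w⟫ = 0 := by
  obtain ⟨x, -, rfl⟩ := hy
  simp [inner_sub_left, h𝒞eq x w hw]

theorem inner_msSolution_eq_zero_of_div_eq_zero (hπ : ∀ v, π (π v) = π v)
    (hπD : ∀ z, D z = 0 → D (π z) = 0)
    (h𝒞mem : ∀ v : V, 𝒞 v ∈ fineSpace D π)
    (h𝒞eq : ∀ v : V, ∀ w ∈ fineSpace D π, ⟪Ainv (ι (𝒞 v)), ι w⟫ = ⟪Ainv (ι v), ι w⟫)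
    {uHms : V} {pH : S} (huHms : uHms ∈ msSpace π 𝒞)
    (hd1 : ∀ v ∈ msSpace π 𝒞, ⟪Ainv (ι uHms), ι v⟫ + ⟪D v, pH⟫ = 0)
    {z : V} (hz : D z = 0) :
    ⟪Ainv (ι uHms), ι z⟫ = 0 := by
  have hπ𝒞 (v : V) : π (𝒞 v) = 0 := (h𝒞mem v).1
  have hD𝒞 (v : V) : D (𝒞 v) = 0 := (h𝒞mem v).2
  set v₀ := π z - 𝒞 (π z)
  have hv₀ : v₀ ∈ msSpace π 𝒞 := ⟨π z, ⟨z, rfl⟩, rfl⟩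
  have hDv₀ : D v₀ = 0 := by simp [v₀, hπD z hz, hD𝒞]
  have hfine : z - v₀ ∈ fineSpace D π := ⟨by simp [v₀, hπ, hπ𝒞], by simp [hz, hDv₀]⟩
  have hms : ⟪Ainv (ι uHms), ι v₀⟫ = 0 := by simpa [hDv₀] using hd1 v₀ hv₀
  rw [← sub_add_cancel z v₀, map_add, inner_add_right, hms, add_zero]
  exact inner_eq_zero_of_mem_msSpace_of_mem_fineSpace Ainv ι D h𝒞eq huHms hfine

end MixedProblem

/-- `Hdiv` models `H₀(div, Ω)` with `L²`-realization `ι` and divergence `D`, `H1` models `H¹(Ω)`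
with gradient `G` and embedding `j`, `Ainv` models `A⁻¹`, `L0` is `L²₀(Ω)` and `QH` the piecewise
polynomials of degree `≤ k`; `π` is the quasi-interpolation and `𝒞` the ideal corrector. -/
theorem ideal_energy_error_estimate_general
    {Hdiv L2v S H1 : Type*}
    [NormedAddCommGroup Hdiv] [InnerProductSpace ℝ Hdiv]
    [NormedAddCommGroup L2v] [InnerProductSpace ℝ L2v]
    [NormedAddCommGroup S] [InnerProductSpace ℝ S]
    [NormedAddCommGroup H1] [InnerProductSpace ℝ H1]
    (ι : Hdiv →L[ℝ] L2v) (D : Hdiv →L[ℝ] S)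
    (G : H1 →L[ℝ] L2v) (j : H1 →L[ℝ] S)
    (Ainv : L2v →L[ℝ] L2v) (hAsym : ∀ w z : L2v, ⟪Ainv w, z⟫ = ⟪w, Ainv z⟫)
    (α β : ℝ) (hα : 0 < α)
    (hlow : ∀ w : L2v, α * ‖w‖ ^ 2 ≤ ⟪Ainv w, w⟫)
    (hupp : ∀ w : L2v, ⟪Ainv w, w⟫ ≤ β * ‖w‖ ^ 2)
    (QH L0 : Submodule ℝ S) [QH.HasOrthogonalProjection]
    (hPL0 : ∀ q ∈ L0, (QH.orthogonalProjectionOnto q : S) ∈ L0)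
    (Hm C_P : ℝ) (hHm : 0 < Hm) (hCP : 0 ≤ C_P)
    -- approximation property of the L²-projection: ‖q − P_H q‖ ≤ C_P·H·‖∇q‖
    (happrox : ∀ r : H1, ‖j r - (QH.orthogonalProjectionOnto (j r) : S)‖ ≤ C_P * Hm * ‖G r‖)
    -- characterization of the weak gradient
    (hGradChar : ∀ (pp : S) (g : L2v),
      (∀ v : Hdiv, ⟪D v, pp⟫ = -⟪g, ι v⟫) → ∃ pt : H1, j pt = pp ∧ G pt = g)
    (π 𝒞 : Hdiv →L[ℝ] Hdiv) (hπproj : ∀ v : Hdiv, π (π v) = π v)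
    (hcomm : ∀ v : Hdiv, D (π v) = (QH.orthogonalProjectionOnto (D v) : S))
    (h𝒞mem : ∀ v : Hdiv, 𝒞 v ∈ LinearMap.ker (π : Hdiv →ₗ[ℝ] Hdiv) ⊓ LinearMap.ker (D : Hdiv →ₗ[ℝ] S))
    (h𝒞eq : ∀ v : Hdiv, ∀ w ∈ LinearMap.ker (π : Hdiv →ₗ[ℝ] Hdiv) ⊓ LinearMap.ker (D : Hdiv →ₗ[ℝ] S),
      ⟪Ainv (ι (𝒞 v)), ι w⟫ = ⟪Ainv (ι v), ι w⟫)
    (hDL0 : ∀ v : Hdiv, D v ∈ L0)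
    (f : S) (hf : f ∈ L0)
    -- exact solution (u, p) with source f
    (u : Hdiv) (p : S)
    (h1 : ∀ v : Hdiv, ⟪Ainv (ι u), ι v⟫ + ⟪D v, p⟫ = 0)
    (h2 : ∀ q ∈ L0, ⟪D u, q⟫ = -⟪f, q⟫)
    -- exact solution (uPf, pPf) with source P_H f
    (uPf : Hdiv) (pPf : S)
    (h1Pf : ∀ v : Hdiv, ⟪Ainv (ι uPf), ι v⟫ + ⟪D v, pPf⟫ = 0)
    (h2Pf : ∀ q ∈ L0, ⟪D uPf, q⟫ = -⟪(QH.orthogonalProjectionOnto f : S), q⟫)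
    -- ideal multiscale solution (uHms, pH)
    (uHms : Hdiv) (pH : S)
    (huHms : uHms ∈ Submodule.map ((ContinuousLinearMap.id ℝ Hdiv - 𝒞) : Hdiv →ₗ[ℝ] Hdiv)
      (LinearMap.range (π : Hdiv →ₗ[ℝ] Hdiv)))
    (hdivV : ∀ v ∈ Submodule.map ((ContinuousLinearMap.id ℝ Hdiv - 𝒞) : Hdiv →ₗ[ℝ] Hdiv)
      (LinearMap.range (π : Hdiv →ₗ[ℝ] Hdiv)), D v ∈ QH)
    (hd1 : ∀ v ∈ Submodule.map ((ContinuousLinearMap.id ℝ Hdiv - 𝒞) : Hdiv →ₗ[ℝ] Hdiv)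
      (LinearMap.range (π : Hdiv →ₗ[ℝ] Hdiv)), ⟪Ainv (ι uHms), ι v⟫ + ⟪D v, pH⟫ = 0)
    (hd2 : ∀ qH ∈ QH, ⟪D uHms, qH⟫ = -⟪f, qH⟫) :
    Real.sqrt ⟪Ainv (ι (u - uHms)), ι (u - uHms)⟫ ≤
      Real.sqrt β * C_P * Hm * ‖f - (QH.orthogonalProjectionOnto f : S)‖ := by
  have hA : Ainv.IsPositive :=
    (Ainv.isPositive_iff).2 ⟨hAsym, fun w => (mul_nonneg hα.le (sq_nonneg _)).trans (hlow w)⟩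
  set Pf := (QH.orthogonalProjectionOnto f : S)
  have hfPf : f - Pf ∈ QHᗮ := QH.sub_starProjection_mem_orthogonal f
  have hDu : D u = -f := Submodule.eq_neg_of_forall_inner_eq_neg_s10 (L0.add_mem (hDL0 u) hf) h2
  have hDuPf : D uPf = -Pf :=
    Submodule.eq_neg_of_forall_inner_eq_neg_s10 (L0.add_mem (hDL0 uPf) (hPL0 f hf)) h2Pf
  have hDuHms : D uHms = -Pf := by
    refine Submodule.eq_neg_of_forall_inner_eq_neg_s10
      (QH.add_mem (hdivV uHms huHms) (Submodule.coe_mem _)) ?_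
    intro q hq
    have hfq := Submodule.inner_left_of_mem_orthogonal hq hfPf
    rw [inner_sub_left, sub_eq_zero] at hfq
    rw [hd2 q hq, hfq]
  have hms (z : Hdiv) (hz : D z = 0) := inner_msSolution_eq_zero_of_div_eq_zero Ainv ι D hπproj
    (fun z hz => by simp [hcomm, hz]) h𝒞mem h𝒞eq huHms hd1 hz
  calc √⟪Ainv (ι (u - uHms)), ι (u - uHms)⟫
      ≤ √⟪Ainv (ι (u - uPf)), ι (u - uPf)⟫ :=
        Real.sqrt_le_sqrt (energy_sub_le_of_div_eq Ainv ι D hA h1 hms (hDuPf.trans hDuHms.symm))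
    _ ≤ √β * C_P * Hm * ‖f - Pf‖ :=
        sqrt_energy_sub_le_of_sub_mem_orthogonal Ainv ι D G j QH hCP hHm.le hA hupp happrox
          hGradChar h1 h1Pf hDu hDuPf hfPf

/-- **Energy-norm error estimate for the ideal multiscale method:**
`⦀u − u_H^ms⦀ ≤ C·H·‖f − P_H f‖` with explicit constant `C = √β·C_P` depending only
on the ellipticity bound `β` of `A` and the projection-approximation constant `C_P`
(which depends on the mesh regularity and the Poincaré–Wirtinger constant), but not
on the mesh size `H` or the oscillations of `A`.  Abstract model: `Hdiv = H₀(div,Ω)`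
with `L²`-realization `ι` into `L2v` and divergence `D` into `S`; `H1 = H¹(Ω)` with
gradient `G` and embedding `j`; `Ainv` models `A⁻¹` with spectral bounds `α, β`;
the energy norm is `⦀v⦀ = √((A⁻¹ιv, ιv))`; `P_H` is the orthogonal projection onto
`Q_H` with the approximation property `‖q − P_H q‖ ≤ C_P·H·‖∇q‖`, `hGradChar` the
weak-gradient characterization, `π, 𝒞` the quasi-interpolation and ideal corrector
building `V^ms = (id−𝒞)(im π)`. -/
theorem ideal_energy_error_estimate
    {Hdiv L2v S H1 : Type*}
    [NormedAddCommGroup Hdiv] [InnerProductSpace ℝ Hdiv] [CompleteSpace Hdiv]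
    [NormedAddCommGroup L2v] [InnerProductSpace ℝ L2v] [CompleteSpace L2v]
    [NormedAddCommGroup S] [InnerProductSpace ℝ S] [CompleteSpace S]
    [NormedAddCommGroup H1] [InnerProductSpace ℝ H1] [CompleteSpace H1]
    (ι : Hdiv →L[ℝ] L2v) (D : Hdiv →L[ℝ] S)
    (G : H1 →L[ℝ] L2v) (j : H1 →L[ℝ] S)
    (Ainv : L2v →L[ℝ] L2v) (hAsym : ∀ w z : L2v, ⟪Ainv w, z⟫ = ⟪w, Ainv z⟫)
    (α β : ℝ) (hα : 0 < α) (hβ : 0 < β)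
    (hlow : ∀ w : L2v, α * ‖w‖ ^ 2 ≤ ⟪Ainv w, w⟫)
    (hupp : ∀ w : L2v, ⟪Ainv w, w⟫ ≤ β * ‖w‖ ^ 2)
    (QH L0 : Submodule ℝ S) [QH.HasOrthogonalProjection]
    (hPL0 : ∀ q ∈ L0, (QH.orthogonalProjectionOnto q : S) ∈ L0)
    (Hm C_P : ℝ) (hHm : 0 < Hm) (hCP : 0 ≤ C_P)
    -- approximation property of the L²-projection: ‖q − P_H q‖ ≤ C_P·H·‖∇q‖
    (happrox : ∀ r : H1, ‖j r - (QH.orthogonalProjectionOnto (j r) : S)‖ ≤ C_P * Hm * ‖G r‖)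
    -- characterization of the weak gradient
    (hGradChar : ∀ (pp : S) (g : L2v),
      (∀ v : Hdiv, ⟪D v, pp⟫ = -⟪g, ι v⟫) → ∃ pt : H1, j pt = pp ∧ G pt = g)
    (π 𝒞 : Hdiv →L[ℝ] Hdiv) (hπproj : ∀ v : Hdiv, π (π v) = π v)
    (hcomm : ∀ v : Hdiv, D (π v) = (QH.orthogonalProjectionOnto (D v) : S))
    (h𝒞mem : ∀ v : Hdiv, 𝒞 v ∈ LinearMap.ker (π : Hdiv →ₗ[ℝ] Hdiv) ⊓ LinearMap.ker (D : Hdiv →ₗ[ℝ] S))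
    (h𝒞eq : ∀ v : Hdiv, ∀ w ∈ LinearMap.ker (π : Hdiv →ₗ[ℝ] Hdiv) ⊓ LinearMap.ker (D : Hdiv →ₗ[ℝ] S),
      ⟪Ainv (ι (𝒞 v)), ι w⟫ = ⟪Ainv (ι v), ι w⟫)
    (hDL0 : ∀ v : Hdiv, D v ∈ L0)
    (f : S) (hf : f ∈ L0)
    -- exact solution (u, p) with source f
    (u : Hdiv) (p : S) (hp : p ∈ L0)
    (h1 : ∀ v : Hdiv, ⟪Ainv (ι u), ι v⟫ + ⟪D v, p⟫ = 0)
    (h2 : ∀ q ∈ L0, ⟪D u, q⟫ = -⟪f, q⟫)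
    -- exact solution (uPf, pPf) with source P_H f
    (uPf : Hdiv) (pPf : S) (hpPf : pPf ∈ L0)
    (h1Pf : ∀ v : Hdiv, ⟪Ainv (ι uPf), ι v⟫ + ⟪D v, pPf⟫ = 0)
    (h2Pf : ∀ q ∈ L0, ⟪D uPf, q⟫ = -⟪(QH.orthogonalProjectionOnto f : S), q⟫)
    -- ideal multiscale solution (uHms, pH)
    (uHms : Hdiv) (pH : S)
    (huHms : uHms ∈ Submodule.map ((ContinuousLinearMap.id ℝ Hdiv - 𝒞) : Hdiv →ₗ[ℝ] Hdiv)
      (LinearMap.range (π : Hdiv →ₗ[ℝ] Hdiv)))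
    (hpH : pH ∈ QH ⊓ L0)
    (hdivV : ∀ v ∈ Submodule.map ((ContinuousLinearMap.id ℝ Hdiv - 𝒞) : Hdiv →ₗ[ℝ] Hdiv)
      (LinearMap.range (π : Hdiv →ₗ[ℝ] Hdiv)), D v ∈ QH)
    (hd1 : ∀ v ∈ Submodule.map ((ContinuousLinearMap.id ℝ Hdiv - 𝒞) : Hdiv →ₗ[ℝ] Hdiv)
      (LinearMap.range (π : Hdiv →ₗ[ℝ] Hdiv)), ⟪Ainv (ι uHms), ι v⟫ + ⟪D v, pH⟫ = 0)
    (hd2 : ∀ qH ∈ QH, ⟪D uHms, qH⟫ = -⟪f, qH⟫) :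
    Real.sqrt ⟪Ainv (ι (u - uHms)), ι (u - uHms)⟫ ≤
      Real.sqrt β * C_P * Hm * ‖f - (QH.orthogonalProjectionOnto f : S)‖ :=
  ideal_energy_error_estimate_general ι D G j Ainv hAsym α β hα hlow hupp QH L0 hPL0 Hm C_P hHm hCP
    happrox hGradChar π 𝒞 hπproj hcomm h𝒞mem h𝒞eq hDL0 f hf u p h1 h2 uPf pPf h1Pf h2Pf uHms pH
    huHms hdivV hd1 hd2
end

section
/- Suppose b satisfies the inf-sup condition on the classical pair (V_H, Q_H ∩ L²₀(Ω)) with constant ρ > 0, i.e., sup_{v_H ∈ V_H\{0}} b(v_H, q_H)/‖v_H‖_{H(div)} ≥ ρ‖q_H‖_{L²} for all q_H ∈ Q_H ∩ L²₀(Ω). Then the multiscale pair (V^ms, Q_H ∩ L²₀(Ω)) satisfies the inf-sup condition with constant ρ(1 + β/α)^{-1}: for all q_H ∈ Q_H ∩ L²₀(Ω), sup_{v^ms ∈ V^ms\{0}} b(v^ms, q_H)/‖v^ms‖_{H(div)} ≥ ρ(1 + β/α)^{-1}‖q_H‖_{L²}. -/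
/-!
Since `div 𝒞v = 0`, the corrected function `v - 𝒞v` has the same divergence as `v`, so
`b(v - 𝒞v, q) = b(v, q)`; and `π(v - 𝒞v) = π v`, so it is nonzero. It remains to bound its
`H(div)` norm. The defining relation `a(𝒞v, 𝒞v) = a(v, 𝒞v)` makes `𝒞v` an `a`-orthogonal
projection of `v`, hence `α‖𝒞v‖² ≤ a(𝒞v, 𝒞v) ≤ a(v, v) ≤ β‖v‖²` in `L²`, which yields
`‖v - 𝒞v‖_{H(div)} ≤ (1 + β/α)‖v‖_{H(div)}`.
-/

open scoped RealInnerProductSpace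

section EnergyBound

variable {E : Type*} [NormedAddCommGroup E] [InnerProductSpace ℝ E] (A : E →L[ℝ] E)

theorem inner_map_self_le_of_inner_map_eq (hsymm : ∀ x y : E, ⟪A x, y⟫ = ⟪x, A y⟫)
    (hnonneg : ∀ x : E, 0 ≤ ⟪A x, x⟫) {u w : E} (hw : ⟪A w, w⟫ = ⟪A u, w⟫) :
    ⟪A w, w⟫ ≤ ⟪A u, u⟫ := by
  have hwu : ⟪A w, u⟫ = ⟪A u, w⟫ := by rw [hsymm, real_inner_comm]
  have hexpand : ⟪A (u - w), u - w⟫ = ⟪A u, u⟫ - ⟪A u, w⟫ - ⟪A w, u⟫ + ⟪A w, w⟫ := by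
    simp only [map_sub, inner_sub_left, inner_sub_right]
    ring
  linarith [hnonneg (u - w)]

theorem norm_le_div_mul_norm_of_inner_map_eq (hsymm : ∀ x y : E, ⟪A x, y⟫ = ⟪x, A y⟫)
    {α β : ℝ} (hα : 0 < α) (hβ : 0 < β) (hlow : ∀ x : E, α * ‖x‖ ^ 2 ≤ ⟪A x, x⟫)
    (hupp : ∀ x : E, ⟪A x, x⟫ ≤ β * ‖x‖ ^ 2) {u w : E} (hw : ⟪A w, w⟫ = ⟪A u, w⟫) :
    ‖w‖ ≤ β / α * ‖u‖ := by
  have hnonneg (x : E) : 0 ≤ ⟪A x, x⟫ := (hlow x).trans' (by positivity)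
  have hw_sq : α * ‖w‖ ^ 2 ≤ β * ‖u‖ ^ 2 :=
    (hlow w).trans ((inner_map_self_le_of_inner_map_eq A hsymm hnonneg hw).trans (hupp u))
  have hu_sq : α * ‖u‖ ^ 2 ≤ β * ‖u‖ ^ 2 := (hlow u).trans (hupp u)
  set t := β / α
  have ht : 0 ≤ t := by positivity
  have hβt : β = t * α := (div_mul_cancel₀ β hα.ne').symm
  rw [hβt] at hw_sq hu_sq
  have hw_sq' : ‖w‖ ^ 2 ≤ t * ‖u‖ ^ 2 := le_of_mul_le_mul_left (by linarith) hα
  have hu_sq' : ‖u‖ ^ 2 ≤ t * ‖u‖ ^ 2 := le_of_mul_le_mul_left (by linarith) hα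
  -- `‖u‖² ≤ t‖u‖²` upgrades `‖w‖² ≤ t‖u‖²` to `‖w‖² ≤ t²‖u‖²`, avoiding a square root.
  apply pow_le_pow_iff_left₀ (norm_nonneg w) (by positivity) two_ne_zero |>.mp
  nlinarith [mul_le_mul_of_nonneg_left hu_sq' ht]

end EnergyBound

theorem norm_le_mul_norm_of_components {H L S : Type*} [SeminormedAddCommGroup H]
    [SeminormedAddCommGroup L] [SeminormedAddCommGroup S] (ι : H → L) (D : H → S)
    (hnorm : ∀ v : H, ‖v‖ ^ 2 = ‖ι v‖ ^ 2 + ‖D v‖ ^ 2) {c : ℝ} (hc : 0 ≤ c) {v x : H}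
    (hι : ‖ι v‖ ≤ c * ‖ι x‖) (hD : ‖D v‖ ≤ c * ‖D x‖) : ‖v‖ ≤ c * ‖x‖ := by
  apply pow_le_pow_iff_left₀ (norm_nonneg v) (by positivity) two_ne_zero |>.mp
  have hι_sq := pow_le_pow_left₀ (norm_nonneg _) hι 2
  have hD_sq := pow_le_pow_left₀ (norm_nonneg _) hD 2
  rw [hnorm v, mul_pow, hnorm x]
  linarith [mul_pow c ‖ι x‖ 2, mul_pow c ‖D x‖ 2]

theorem norm_sub_corrector_le {H L S : Type*} [NormedAddCommGroup H] [NormedSpace ℝ H]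
    [NormedAddCommGroup L] [InnerProductSpace ℝ L] [NormedAddCommGroup S] [NormedSpace ℝ S]
    (ι : H →L[ℝ] L) (D : H →L[ℝ] S) (A : L →L[ℝ] L)
    (hnorm : ∀ v : H, ‖v‖ ^ 2 = ‖ι v‖ ^ 2 + ‖D v‖ ^ 2)
    (hsymm : ∀ x y : L, ⟪A x, y⟫ = ⟪x, A y⟫) {α β : ℝ} (hα : 0 < α) (hβ : 0 < β)
    (hlow : ∀ x : L, α * ‖x‖ ^ 2 ≤ ⟪A x, x⟫) (hupp : ∀ x : L, ⟪A x, x⟫ ≤ β * ‖x‖ ^ 2)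
    {v c : H} (hc_div : D c = 0) (hc_eq : ⟪A (ι c), ι c⟫ = ⟪A (ι v), ι c⟫) :
    ‖v - c‖ ≤ (1 + β / α) * ‖v‖ := by
  have ht : 0 ≤ β / α := by positivity
  have hιc : ‖ι c‖ ≤ β / α * ‖ι v‖ :=
    norm_le_div_mul_norm_of_inner_map_eq A hsymm hα hβ hlow hupp hc_eq
  refine norm_le_mul_norm_of_components ι D hnorm (by positivity) ?_ ?_
  · rw [map_sub]
    linarith [norm_sub_le (ι v) (ι c)]
  · rw [map_sub, hc_div, sub_zero]
    nlinarith [norm_nonneg (D v)]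

theorem multiscale_infsup_general
    {Hdiv L2v S : Type*}
    [NormedAddCommGroup Hdiv] [InnerProductSpace ℝ Hdiv]
    [NormedAddCommGroup L2v] [InnerProductSpace ℝ L2v]
    [NormedAddCommGroup S] [InnerProductSpace ℝ S]
    (ι : Hdiv →L[ℝ] L2v) (D : Hdiv →L[ℝ] S)
    (hnorm : ∀ v : Hdiv, ‖v‖ ^ 2 = ‖ι v‖ ^ 2 + ‖D v‖ ^ 2)
    (Ainv : L2v →L[ℝ] L2v) (hAsym : ∀ w z : L2v, ⟪Ainv w, z⟫ = ⟪w, Ainv z⟫)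
    (α β : ℝ) (hα : 0 < α) (hβ : 0 < β)
    (hlow : ∀ w : L2v, α * ‖w‖ ^ 2 ≤ ⟪Ainv w, w⟫)
    (hupp : ∀ w : L2v, ⟪Ainv w, w⟫ ≤ β * ‖w‖ ^ 2)
    (π 𝒞 : Hdiv →L[ℝ] Hdiv) (hπproj : ∀ v : Hdiv, π (π v) = π v)
    (h𝒞mem : ∀ v : Hdiv, 𝒞 v ∈ LinearMap.ker (π : Hdiv →ₗ[ℝ] Hdiv) ⊓ LinearMap.ker (D : Hdiv →ₗ[ℝ] S))
    (h𝒞eq : ∀ v : Hdiv, ∀ w ∈ LinearMap.ker (π : Hdiv →ₗ[ℝ] Hdiv) ⊓ LinearMap.ker (D : Hdiv →ₗ[ℝ] S),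
      ⟪Ainv (ι (𝒞 v)), ι w⟫ = ⟪Ainv (ι v), ι w⟫)
    (QH L0 : Submodule ℝ S)
    (ρ : ℝ) (hρ : 0 < ρ)
    (hinfsup : ∀ qH ∈ QH ⊓ L0,
      ∃ vH ∈ LinearMap.range (π : Hdiv →ₗ[ℝ] Hdiv), vH ≠ 0 ∧ ρ * ‖qH‖ * ‖vH‖ ≤ ⟪D vH, qH⟫) :
    ∀ qH ∈ QH ⊓ L0,
      ∃ v ∈ Submodule.map ((ContinuousLinearMap.id ℝ Hdiv - 𝒞) : Hdiv →ₗ[ℝ] Hdiv)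
        (LinearMap.range (π : Hdiv →ₗ[ℝ] Hdiv)),
        v ≠ 0 ∧ ρ * (1 + β / α)⁻¹ * ‖qH‖ * ‖v‖ ≤ ⟪D v, qH⟫ := by
  intro qH hqH
  obtain ⟨vH, ⟨x, hx⟩, hvH_ne, hvH⟩ := hinfsup qH hqH
  have hπvH : π vH = vH := by rw [← hx, ContinuousLinearMap.coe_coe, hπproj]
  have hπ𝒞 : π (𝒞 vH) = 0 := (h𝒞mem vH).1
  have hD𝒞 : D (𝒞 vH) = 0 := (h𝒞mem vH).2
  have hstab : ‖vH - 𝒞 vH‖ ≤ (1 + β / α) * ‖vH‖ :=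
    norm_sub_corrector_le ι D Ainv hnorm hAsym hα hβ hlow hupp hD𝒞 (h𝒞eq vH _ (h𝒞mem vH))
  refine ⟨vH - 𝒞 vH, ⟨vH, ⟨x, hx⟩, by simp⟩, fun h ↦ hvH_ne ?_, ?_⟩
  · calc vH = π vH - π (𝒞 vH) := by rw [hπvH, hπ𝒞, sub_zero]
      _ = 0 := by rw [← map_sub, h, map_zero]
  · have hC : 0 < 1 + β / α := by positivity
    calc ρ * (1 + β / α)⁻¹ * ‖qH‖ * ‖vH - 𝒞 vH‖
        = ρ * ‖qH‖ * ((1 + β / α)⁻¹ * ‖vH - 𝒞 vH‖) := by ring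
      _ ≤ ρ * ‖qH‖ * ‖vH‖ := by
          gcongr
          exact inv_mul_le_of_le_mul₀ hC.le (norm_nonneg _) hstab
      _ ≤ ⟪D vH, qH⟫ := hvH
      _ = ⟪D (vH - 𝒞 vH), qH⟫ := by rw [map_sub, hD𝒞, sub_zero]

/-- **Inf-sup stability transfers from `(V_H, Q_H ∩ L²₀)` to `(V^ms, Q_H ∩ L²₀)`
with constant `ρ(1 + β/α)⁻¹`.**  Abstract model: `Hdiv = H₀(div,Ω)` with
`L²`-realization `ι`, divergence `D` and `H(div)`-norm identity; `Ainv` models `A⁻¹`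
with spectral bounds `α, β`; `π` is the stable commuting quasi-interpolation with
`V_H = im π`, `W_{div0} = ker π ⊓ ker D`, and `𝒞` the correction operator
(`a(𝒞v,w) = a(v,w)` for `w ∈ W_{div0}` with `a(u,v) = (A⁻¹ιu, ιv)`, `div 𝒞v = 0`).
If `b(v,q) = (div v, q)` satisfies the inf-sup condition on `(V_H, Q_H ∩ L²₀)` with
constant `ρ`, then it satisfies it on `(V^ms, Q_H ∩ L²₀)` with constant `ρ(1+β/α)⁻¹`. -/
theorem multiscale_infsup
    {Hdiv L2v S : Type*}
    [NormedAddCommGroup Hdiv] [InnerProductSpace ℝ Hdiv] [CompleteSpace Hdiv]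
    [NormedAddCommGroup L2v] [InnerProductSpace ℝ L2v] [CompleteSpace L2v]
    [NormedAddCommGroup S] [InnerProductSpace ℝ S] [CompleteSpace S]
    (ι : Hdiv →L[ℝ] L2v) (D : Hdiv →L[ℝ] S)
    (hnorm : ∀ v : Hdiv, ‖v‖ ^ 2 = ‖ι v‖ ^ 2 + ‖D v‖ ^ 2)
    (Ainv : L2v →L[ℝ] L2v) (hAsym : ∀ w z : L2v, ⟪Ainv w, z⟫ = ⟪w, Ainv z⟫)
    (α β : ℝ) (hα : 0 < α) (hβ : 0 < β)
    (hlow : ∀ w : L2v, α * ‖w‖ ^ 2 ≤ ⟪Ainv w, w⟫)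
    (hupp : ∀ w : L2v, ⟪Ainv w, w⟫ ≤ β * ‖w‖ ^ 2)
    (π 𝒞 : Hdiv →L[ℝ] Hdiv) (hπproj : ∀ v : Hdiv, π (π v) = π v)
    (h𝒞mem : ∀ v : Hdiv, 𝒞 v ∈ LinearMap.ker (π : Hdiv →ₗ[ℝ] Hdiv) ⊓ LinearMap.ker (D : Hdiv →ₗ[ℝ] S))
    (h𝒞eq : ∀ v : Hdiv, ∀ w ∈ LinearMap.ker (π : Hdiv →ₗ[ℝ] Hdiv) ⊓ LinearMap.ker (D : Hdiv →ₗ[ℝ] S),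
      ⟪Ainv (ι (𝒞 v)), ι w⟫ = ⟪Ainv (ι v), ι w⟫)
    (QH L0 : Submodule ℝ S)
    (ρ : ℝ) (hρ : 0 < ρ)
    (hinfsup : ∀ qH ∈ QH ⊓ L0,
      ∃ vH ∈ LinearMap.range (π : Hdiv →ₗ[ℝ] Hdiv), vH ≠ 0 ∧ ρ * ‖qH‖ * ‖vH‖ ≤ ⟪D vH, qH⟫) :
    ∀ qH ∈ QH ⊓ L0,
      ∃ v ∈ Submodule.map ((ContinuousLinearMap.id ℝ Hdiv - 𝒞) : Hdiv →ₗ[ℝ] Hdiv)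
        (LinearMap.range (π : Hdiv →ₗ[ℝ] Hdiv)),
        v ≠ 0 ∧ ρ * (1 + β / α)⁻¹ * ‖qH‖ * ‖v‖ ≤ ⟪D v, qH⟫ :=
  multiscale_infsup_general ι D hnorm Ainv hAsym α β hα hβ hlow hupp π 𝒞 hπproj h𝒞mem h𝒞eq QH L0 ρ
    hρ hinfsup
end
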